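/- L^∘-grammars recognize all permutations of regular languages: for every regular language R over a finite alphabet Σ with ε ∉ R, there exists an L^∘-grammar G such that L(G) = perm(R). -/

import Mathlib

/-- Types of the Lambek calculus with the cyclic shift `L^∘`, built from
primitive types `P` by `\` (`ldiv A B = A \ B`), `/` (`rdiv B A = B / A`),
`·` (`mul`) and the cyclic shift `^∘` (`circ`). -/
inductive Fm (P : Type) : Type
  | prim : P → Fm P
  | ldiv : Fm P → Fm P → Fm P
  | rdiv : Fm P → Fm P → Fm P
  | mul  : Fm P → Fm P → Fm P
  | circ : Fm P → Fm P
deriving DecidableEq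

open Fm

/-- Derivability of sequents in the Lambek calculus with the cyclic shift `L^∘`.
The Boolean flag indicates whether the rule (cut) may be used:
`Dv P true` is `L^∘` (with cut), `Dv P false` is its cut-free part. -/
inductive Dv (P : Type) : Bool → List (Fm P) → Fm P → Prop
  | ax (c : Bool) (A : Fm P) :
      Dv P c [A] A
  | ldivL (c : Bool) (Γ Δ Pi : List (Fm P)) (A B C : Fm P) :
      Dv P c (Γ ++ B :: Δ) C → Dv P c Pi A → Pi ≠ [] →
      Dv P c (Γ ++ Pi ++ ldiv A B :: Δ) C
  | ldivR (c : Bool) (Pi : List (Fm P)) (A B : Fm P) :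
      Dv P c (A :: Pi) B → Pi ≠ [] →
      Dv P c Pi (ldiv A B)
  | rdivL (c : Bool) (Γ Δ Pi : List (Fm P)) (A B C : Fm P) :
      Dv P c (Γ ++ B :: Δ) C → Dv P c Pi A → Pi ≠ [] →
      Dv P c (Γ ++ rdiv B A :: (Pi ++ Δ)) C
  | rdivR (c : Bool) (Pi : List (Fm P)) (A B : Fm P) :
      Dv P c (Pi ++ [A]) B → Pi ≠ [] →
      Dv P c Pi (rdiv B A)
  | mulL (c : Bool) (Γ Δ : List (Fm P)) (A B C : Fm P) :
      Dv P c (Γ ++ A :: B :: Δ) C →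
      Dv P c (Γ ++ mul A B :: Δ) C
  | mulR (c : Bool) (Pi Psi : List (Fm P)) (A B : Fm P) :
      Dv P c Pi A → Dv P c Psi B → Pi ≠ [] → Psi ≠ [] →
      Dv P c (Pi ++ Psi) (mul A B)
  | circR (c : Bool) (Pi : List (Fm P)) (A : Fm P) :
      Dv P c Pi A →
      Dv P c Pi (circ A)
  | circL (c : Bool) (A B : Fm P) :
      Dv P c [B] (circ A) →
      Dv P c [circ B] (circ A)
  | circC (c : Bool) (Pi Psi : List (Fm P)) (A : Fm P) :
      Dv P c (Pi ++ Psi) (circ A) → Pi ≠ [] → Psi ≠ [] →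
      Dv P c (Psi ++ Pi) (circ A)
  | cut (Γ Δ Pi : List (Fm P)) (A B : Fm P) :
      Dv P true Pi A → Dv P true (Γ ++ A :: Δ) B → Pi ≠ [] →
      Dv P true (Γ ++ Pi ++ Δ) B

/-- The language recognized by a categorial grammar based on a calculus with
derivability relation `K`: the grammar has distinguished type `S` and finite
dictionary `R` (a list of pairs `(a, T)` meaning `a ▷ T`); a nonempty word
`a1…an` is recognized iff there are types `T1,…,Tn` with `ai ▷ Ti` and
`K ⊢ T1,…,Tn → S`. -/
def GLang {α Ty : Type} (K : List Ty → Ty → Prop) (S : Ty) (R : List (α × Ty)) :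
    Set (List α) :=
  { w | w ≠ [] ∧ ∃ Ts : List Ty, List.Forall₂ (fun a T => (a, T) ∈ R) w Ts ∧ K Ts S }

/-- The permutation closure `perm(L)` of a language `L`: all words obtained by
permuting the letters of a word of `L`. -/
def permClosure {α : Type} (L : Set (List α)) : Set (List α) :=
  { w | ∃ v ∈ L, w.Perm v }

/-!
Take a DFA for `R` and add a fresh final state `none`, entered by every transition into an
accepting state; as `ε ∉ R`, the words leading from the start state to `none` are exactly those
of `R`. States become primitive types, a letter `a` gets the type `q^∘ \ r^∘` for every
transition `q -a-> r`, and the distinguished type is `s^∘ \ f^∘`.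

Completeness: for a path from `s` to `f`, any permutation of the types of its letters derives
`f^∘` from `s^∘`, because the cyclic rule rotates the antecedent until the division to be
eliminated last stands at its end.

Soundness: `L^∘` is sound in models where types denote sets of multisets, the comma and `·` are
pointwise sums and `^∘` is the identity. Interpreting a state by the multisets of the words
leading to it, every recognized word has the multiset of a word of `R`.
-/

open Pointwise

namespace Fm

variable {P β : Type}

def interp (v : P → Set (Multiset β)) : Fm P → Set (Multiset β)
  | prim p => v p
  | ldiv A B => {x | ∀ u ∈ interp v A, u + x ∈ interp v B}
  | rdiv B A => {x | ∀ u ∈ interp v A, x + u ∈ interp v B}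
  | mul A B => interp v A + interp v B
  | circ A => interp v A

def interpList (v : P → Set (Multiset β)) (Γ : List (Fm P)) : Set (Multiset β) :=
  (Γ.map (interp v)).sum

variable (v : P → Set (Multiset β))

@[simp] theorem interpList_nil : interpList v [] = 0 := rfl

@[simp] theorem interpList_cons (A : Fm P) (Γ : List (Fm P)) :
    interpList v (A :: Γ) = interp v A + interpList v Γ := List.sum_cons

@[simp] theorem interpList_append (Γ Δ : List (Fm P)) :
    interpList v (Γ ++ Δ) = interpList v Γ + interpList v Δ := by
  simp [interpList]

theorem add_interp_ldiv_subset (A B : Fm P) : interp v A + interp v (ldiv A B) ⊆ interp v B :=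
  Set.add_subset_iff.mpr fun _ hu _ hx => hx _ hu

theorem interp_rdiv_add_subset (A B : Fm P) : interp v (rdiv B A) + interp v A ⊆ interp v B :=
  Set.add_subset_iff.mpr fun _ hx _ hu => hx _ hu

end Fm

theorem Dv.interpList_subset {P β : Type} (v : P → Set (Multiset β)) {c : Bool}
    {Γ : List (Fm P)} {A : Fm P} (h : Dv P c Γ A) : interpList v Γ ⊆ interp v A := by
  induction h with
  | ax => simp
  | ldivL _ Γ Δ Pi A B C _ _ _ ihB ihA =>
    simp only [interpList_append, interpList_cons] at ihB ⊢
    calc interpList v Γ + interpList v Pi + (interp v (ldiv A B) + interpList v Δ)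
        = interpList v Γ + ((interpList v Pi + interp v (ldiv A B)) + interpList v Δ) := by abel
      _ ⊆ interpList v Γ + (interp v B + interpList v Δ) := by
        gcongr
        exact (Set.add_subset_add_right ihA).trans (add_interp_ldiv_subset v A B)
      _ ⊆ interp v C := ihB
  | ldivR _ Pi A B _ _ ih =>
    intro x hx u hu
    exact ih (by simpa using Set.add_mem_add hu hx)
  | rdivL _ Γ Δ Pi A B C _ _ _ ihB ihA =>
    simp only [interpList_append, interpList_cons] at ihB ⊢
    calc interpList v Γ + (interp v (rdiv B A) + (interpList v Pi + interpList v Δ))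
        = interpList v Γ + ((interp v (rdiv B A) + interpList v Pi) + interpList v Δ) := by abel
      _ ⊆ interpList v Γ + (interp v B + interpList v Δ) := by
        gcongr
        exact (Set.add_subset_add_left ihA).trans (interp_rdiv_add_subset v A B)
      _ ⊆ interp v C := ihB
  | rdivR _ Pi A B _ _ ih =>
    intro x hx u hu
    exact ih (by simpa using Set.add_mem_add hx hu)
  | mulL _ Γ Δ A B C _ ih =>
    simpa only [interpList_append, interpList_cons, interp, add_assoc] using ih
  | mulR _ Pi Psi A B _ _ _ _ ihA ihB =>
    simpa only [interpList_append, interp] using Set.add_subset_add ihA ihB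
  | circR _ _ _ _ ih => exact ih
  | circL _ _ _ _ ih => simpa [interp] using ih
  | circC _ _ _ _ _ _ _ ih =>
    simpa only [interpList_append, add_comm] using ih
  | cut Γ Δ Pi A B _ _ _ ihPi ihB =>
    simp only [interpList_append, interpList_cons] at ihB ⊢
    calc interpList v Γ + interpList v Pi + interpList v Δ
        ⊆ interpList v Γ + interp v A + interpList v Δ := by gcongr
      _ ⊆ interp v B := by simpa only [add_assoc] using ihB

theorem Dv.rotate {P : Type} {c : Bool} {Pi Psi : List (Fm P)} {A : Fm P}
    (h : Dv P c (Pi ++ Psi) (circ A)) : Dv P c (Psi ++ Pi) (circ A) := by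
  rcases eq_or_ne Pi [] with rfl | hPi
  · simpa using h
  rcases eq_or_ne Psi [] with rfl | hPsi
  · simpa using h
  exact .circC c Pi Psi A h hPi hPsi

theorem Dv.insert_ldiv_circ {P : Type} {c : Bool} {Γ Δ : List (Fm P)} {A B : Fm P}
    (h : Dv P c (Γ ++ Δ) (circ A)) (hne : Γ ++ Δ ≠ []) :
    Dv P c (Γ ++ ldiv (circ A) (circ B) :: Δ) (circ B) := by
  have h' := Dv.ldivL c [] [] _ (circ A) (circ B) (circ B) (.ax c _) h.rotate
    (by simpa [and_comm] using hne)
  rw [List.nil_append, List.append_assoc] at h'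
  simpa using h'.rotate

namespace PermGrammar

variable {ι α P : Type}

inductive Reaches (δ : List (ι × α × ι)) (p : ι) : List α → ι → Prop
  | refl : Reaches δ p [] p
  | snoc {u : List α} {a : α} {q r : ι} :
      Reaches δ p u q → (q, a, r) ∈ δ → Reaches δ p (u ++ [a]) r

variable (e : ι ↪ P)

def marker (o : ι) : Fm P := circ (prim (e o))

def lexicon (δ : List (ι × α × ι)) : List (α × Fm P) :=
  δ.map fun t => (t.2.1, ldiv (marker e t.1) (marker e t.2.2))

variable {e} {δ : List (ι × α × ι)}

theorem mem_lexicon {a : α} {T : Fm P} :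
    (a, T) ∈ lexicon e δ ↔
      ∃ p q, (p, a, q) ∈ δ ∧ T = ldiv (marker e p) (marker e q) := by
  simp [lexicon, eq_comm]

theorem Reaches.exists_lexicon_dv {p q : ι} {u : List α} (h : Reaches δ p u q) (c : Bool) :
    ∃ Ts, List.Forall₂ (fun a T => (a, T) ∈ lexicon e δ) u Ts ∧
      ∀ B : List (Fm P), B.Perm Ts → Dv P c (marker e p :: B) (marker e q) := by
  induction h with
  | refl => exact ⟨[], .nil, fun B hB => by rw [hB.eq_nil]; exact .ax c _⟩
  | @snoc u a q r _ hqr ih =>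
    obtain ⟨Ts, hTs, hdv⟩ := ih
    set T := ldiv (marker e q) (marker e r)
    refine ⟨Ts ++ [T], List.rel_append hTs (.cons (mem_lexicon.mpr ⟨q, r, hqr, rfl⟩) .nil),
      fun B hB => ?_⟩
    have hT : T ∈ B := hB.mem_iff.mpr (by simp)
    obtain ⟨Γ, Δ, rfl⟩ := List.append_of_mem hT
    have hΓΔ : (Γ ++ Δ).Perm Ts := (List.perm_cons T).mp
      (List.perm_middle.symm.trans (hB.trans (List.perm_append_singleton T Ts)))
    exact Dv.insert_ldiv_circ (Γ := marker e p :: Γ) (hdv _ hΓΔ) (by simp)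

variable (e δ) in
def reachValuation (s : ι) : P → Set (Multiset α) :=
  fun n => {m | ∃ o u, e o = n ∧ Reaches δ s u o ∧ (u : Multiset α) = m}

theorem interp_marker (s o : ι) :
    interp (reachValuation e δ s) (marker e o) =
      {m | ∃ u, Reaches δ s u o ∧ (u : Multiset α) = m} := by
  ext m
  simp [interp, marker, reachValuation, e.injective.eq_iff]

theorem singleton_mem_interp_of_mem_lexicon {s : ι} {a : α} {T : Fm P}
    (h : (a, T) ∈ lexicon e δ) : {a} ∈ interp (reachValuation e δ s) T := by
  obtain ⟨p, q, hpq, rfl⟩ := mem_lexicon.mp h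
  rintro _ hu
  rw [interp_marker] at hu ⊢
  obtain ⟨u, hu, rfl⟩ := hu
  exact ⟨u ++ [a], hu.snoc hpq, by rw [← Multiset.coe_add, Multiset.coe_singleton]⟩

theorem coe_mem_interpList {s : ι} {w : List α} {Ts : List (Fm P)}
    (h : List.Forall₂ (fun a T => (a, T) ∈ lexicon e δ) w Ts) :
    (w : Multiset α) ∈ interpList (reachValuation e δ s) Ts := by
  induction h with
  | nil => exact Set.mem_zero.mpr rfl
  | @cons a T w Ts haT _ ih =>
    rw [interpList_cons, ← Multiset.cons_coe, ← Multiset.singleton_add]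
    exact Set.add_mem_add (singleton_mem_interp_of_mem_lexicon haT) ih

theorem exists_reaches_perm_of_dv {c : Bool} {s f : ι} {w : List α} {Ts : List (Fm P)}
    (hw : List.Forall₂ (fun a T => (a, T) ∈ lexicon e δ) w Ts)
    (h : Dv P c Ts (ldiv (marker e s) (marker e f))) : ∃ u, Reaches δ s u f ∧ w.Perm u := by
  have hsf := h.interpList_subset (reachValuation e δ s) (coe_mem_interpList hw) 0
    (by rw [interp_marker]; exact ⟨[], .refl, rfl⟩)
  rw [interp_marker] at hsf
  obtain ⟨u, hu, huw⟩ := hsf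
  exact ⟨u, hu, Multiset.coe_eq_coe.mp (by simpa using huw.symm)⟩

variable (e δ) in
theorem GLang_lexicon (s f : ι) :
    GLang (Dv P true) (ldiv (marker e s) (marker e f)) (lexicon e δ) =
      permClosure {u | u ≠ [] ∧ Reaches δ s u f} := by
  ext w
  constructor
  · rintro ⟨hw, Ts, hTs, h⟩
    obtain ⟨u, hu, hwu⟩ := exists_reaches_perm_of_dv hTs h
    exact ⟨u, ⟨fun hu0 => hw (by subst hu0; exact hwu.eq_nil), hu⟩, hwu⟩
  · rintro ⟨u, ⟨hu0, hu⟩, hwu⟩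
    obtain ⟨Ts, hTs, hdv⟩ := hu.exists_lexicon_dv (e := e) true
    obtain ⟨Ts', hTs', hperm⟩ := List.perm_comp_forall₂ hwu hTs
    have hw : w ≠ [] := by rintro rfl; exact hu0 hwu.nil_eq.symm
    refine ⟨hw, Ts', hTs', .ldivR _ _ _ _ (hdv _ hperm) ?_⟩
    rintro rfl
    exact hw (List.forall₂_nil_right_iff.mp hTs')

end PermGrammar

namespace DFA

open PermGrammar

variable {α σ : Type} (M : DFA α σ)

def IsFinalizedTransition : Option σ × α × Option σ → Prop
  | (some q, a, some r) => M.step q a = r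
  | (some q, a, none) => M.step q a ∈ M.accept
  | (none, _, _) => False

variable [Fintype α] [Fintype σ]

open Classical in
noncomputable def finalizedTransitions : List (Option σ × α × Option σ) :=
  (Finset.univ.filter M.IsFinalizedTransition).toList

theorem mem_finalizedTransitions {t : Option σ × α × Option σ} :
    t ∈ M.finalizedTransitions ↔ M.IsFinalizedTransition t := by
  simp [finalizedTransitions]

theorem reaches_finalizedTransitions_evalFrom (p : σ) (u : List α) :
    Reaches M.finalizedTransitions (some p) u (some (M.evalFrom p u)) := by
  induction u using List.reverseRecOn with
  | nil => exact .refl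
  | append_singleton u a ih =>
    rw [evalFrom_append_singleton]
    exact ih.snoc ((M.mem_finalizedTransitions).mpr rfl)

theorem reaches_finalizedTransitions_iff {p : σ} {u : List α} {o : Option σ} :
    Reaches M.finalizedTransitions (some p) u o ↔
      o = some (M.evalFrom p u) ∨ o = none ∧ u ≠ [] ∧ M.evalFrom p u ∈ M.accept := by
  constructor
  · intro h
    induction h with
    | refl => exact .inl rfl
    | @snoc u a q r _ hqr ih =>
      rw [mem_finalizedTransitions] at hqr
      rw [evalFrom_append_singleton]
      rcases ih with rfl | ⟨rfl, -⟩
      · cases r with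
        | some r => exact .inl (congrArg some hqr.symm)
        | none => exact .inr ⟨rfl, by simp, hqr⟩
      · exact hqr.elim
  · rintro (rfl | ⟨rfl, hu, hacc⟩)
    · exact M.reaches_finalizedTransitions_evalFrom p u
    · cases u using List.reverseRecOn with
      | nil => exact absurd rfl hu
      | append_singleton u a =>
        rw [evalFrom_append_singleton] at hacc
        exact (M.reaches_finalizedTransitions_evalFrom p u).snoc
          ((M.mem_finalizedTransitions).mpr hacc)

theorem setOf_reaches_none :
    {u | u ≠ [] ∧ Reaches M.finalizedTransitions (some M.start) u none} =
      {u | u ≠ [] ∧ u ∈ M.accepts} := by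
  ext u
  simp [reaches_finalizedTransitions_iff, mem_accepts, eval]

end DFA

/-- `L^∘`-grammars recognize all permutations of regular languages: for every
regular language `R` over a finite alphabet with `ε ∉ R`, some `L^∘`-grammar
recognizes exactly `perm(R)`. -/
theorem Lcirc_grammars_recognize_perm_of_regular (α : Type) [Fintype α]
    (R : Language α) (hreg : R.IsRegular) (hε : [] ∉ R) :
    ∃ (S : Fm ℕ) (rel : List (α × Fm ℕ)),
      GLang (Dv ℕ true) S rel = permClosure R := by
  obtain ⟨σ, _, M, rfl⟩ := hreg
  let e : Option σ ↪ ℕ := (Fintype.equivFin (Option σ)).toEmbedding.trans Fin.valEmbedding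
  refine ⟨ldiv (PermGrammar.marker e (some M.start)) (PermGrammar.marker e none),
    PermGrammar.lexicon e M.finalizedTransitions, ?_⟩
  rw [PermGrammar.GLang_lexicon, M.setOf_reaches_none]
  congr 1
  ext u
  exact and_iff_right_of_imp fun hu h0 => hε (h0 ▸ hu)
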